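/- arXiv:2110.07759 — 3 statements merged into one kernel-verified Lean document; each statement's English description precedes it below -/
import Mathlib

section
/- Fix real numbers φ₀ and r > 0. On D = (0,π)×ℝ define f(θ) = cos θ/√(r²·sin²θ + cos²θ), u(θ,φ) = sin(φ₀)·f(θ), and v(θ,φ) = cos(φ₀)·f(θ). Then for all (θ,φ) ∈ D the expression (cos φ₀/r)·∂v/∂θ + (sin φ₀/(r·sin θ))·∂v/∂φ + (sin φ₀/r)·∂u/∂θ − (cos φ₀/(r·sin θ))·∂u/∂φ equals −r·sin θ/(r²·sin²θ + cos²θ)^{3/2}, which is strictly negative; in particular it never vanishes. -/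
/-- For the meridian field `X_{m,0}`, the real part of the Cauchy–Riemann condition,
`(cos φ₀/r)·∂θ v + (sin φ₀/(r sin θ))·∂φ v + (sin φ₀/r)·∂θ u − (cos φ₀/(r sin θ))·∂φ u`,
equals `−r·sin θ/(r²·sin²θ + cos²θ)^{3/2}`, which is strictly negative on `D = (0,π)×ℝ`. -/
theorem meridian_zero_fails_cauchy_riemann (φ₀ r : ℝ) (hr : 0 < r)
    (f : ℝ → ℝ)
    (hf : f = fun θ => Real.cos θ / Real.sqrt (r ^ 2 * Real.sin θ ^ 2 + Real.cos θ ^ 2))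
    (u v : ℝ → ℝ → ℝ)
    (hu : u = fun θ _φ => Real.sin φ₀ * f θ)
    (hv : v = fun θ _φ => Real.cos φ₀ * f θ)
    (θ φ : ℝ) (hθ : θ ∈ Set.Ioo 0 Real.pi) :
    Real.cos φ₀ / r * deriv (fun t => v t φ) θ
        + Real.sin φ₀ / (r * Real.sin θ) * deriv (fun p => v θ p) φ
        + Real.sin φ₀ / r * deriv (fun t => u t φ) θ
        - Real.cos φ₀ / (r * Real.sin θ) * deriv (fun p => u θ p) φ
      = -(r * Real.sin θ) / (r ^ 2 * Real.sin θ ^ 2 + Real.cos θ ^ 2) ^ ((3 : ℝ) / 2) ∧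
    -(r * Real.sin θ) / (r ^ 2 * Real.sin θ ^ 2 + Real.cos θ ^ 2) ^ ((3 : ℝ) / 2) < 0 := by
  obtain ⟨h0, hπ⟩ := hθ
  have hs : 0 < Real.sin θ := Real.sin_pos_of_pos_of_lt_pi h0 hπ
  have hQ : 0 < r ^ 2 * Real.sin θ ^ 2 + Real.cos θ ^ 2 := by
    have := mul_pos (pow_pos hr 2) (pow_pos hs 2)
    nlinarith [sq_nonneg (Real.cos θ)]
  set Q : ℝ := r ^ 2 * Real.sin θ ^ 2 + Real.cos θ ^ 2 with hQdef
  have hsq : 0 < Real.sqrt Q := Real.sqrt_pos.mpr hQ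
  have hsq2 : Real.sqrt Q ^ 2 = Q := Real.sq_sqrt hQ.le
  -- derivative of inner function
  have hg : HasDerivAt (fun t => r ^ 2 * Real.sin t ^ 2 + Real.cos t ^ 2)
      (r ^ 2 * (2 * Real.sin θ * Real.cos θ) + 2 * Real.cos θ * (-Real.sin θ)) θ := by
    have h1 := ((Real.hasDerivAt_sin θ).pow 2).const_mul (r ^ 2)
    have h2 := (Real.hasDerivAt_cos θ).pow 2
    exact (h1.add h2).congr_deriv (by ring)
  have hgs : HasDerivAt (fun t => Real.sqrt (r ^ 2 * Real.sin t ^ 2 + Real.cos t ^ 2))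
      ((r ^ 2 * (2 * Real.sin θ * Real.cos θ) + 2 * Real.cos θ * (-Real.sin θ)) / (2 * Real.sqrt Q)) θ :=
    hg.sqrt hQ.ne'
  have hfd : HasDerivAt f
      ((-Real.sin θ * Real.sqrt Q - Real.cos θ * ((r ^ 2 * (2 * Real.sin θ * Real.cos θ) + 2 * Real.cos θ * (-Real.sin θ)) / (2 * Real.sqrt Q))) / (Real.sqrt Q) ^ 2) θ := by
    rw [hf]
    exact (Real.hasDerivAt_cos θ).div hgs hsq.ne'
  have h32 : Q ^ ((3 : ℝ) / 2) = Real.sqrt Q ^ 3 := by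
    rw [show ((3 : ℝ) / 2) = (1 / 2 : ℝ) * (3 : ℕ) by norm_num, Real.rpow_mul hQ.le,
      ← Real.sqrt_eq_rpow, Real.rpow_natCast]
  have hval : (-Real.sin θ * Real.sqrt Q - Real.cos θ * ((r ^ 2 * (2 * Real.sin θ * Real.cos θ) + 2 * Real.cos θ * (-Real.sin θ)) / (2 * Real.sqrt Q))) / (Real.sqrt Q) ^ 2
      = -(r ^ 2 * Real.sin θ) / Q ^ ((3 : ℝ) / 2) := by
    rw [h32]
    field_simp
    linear_combination (-1) * hsq2 + (-1) * hQdef + (-r ^ 2) * (Real.sin_sq_add_cos_sq θ)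
  have hderiv : deriv (fun t => f t) θ = -(r ^ 2 * Real.sin θ) / Q ^ ((3 : ℝ) / 2) := by
    rw [← hval]; exact hfd.deriv
  have hQpow : 0 < Q ^ ((3 : ℝ) / 2) := Real.rpow_pos_of_pos hQ _
  constructor
  · have hdu : deriv (fun t => u t φ) θ = Real.sin φ₀ * (-(r ^ 2 * Real.sin θ) / Q ^ ((3 : ℝ) / 2)) := by
      rw [hu]
      rw [show (fun t => Real.sin φ₀ * f t) = fun t => Real.sin φ₀ * f t from rfl]
      rw [deriv_const_mul _ hfd.differentiableAt, hderiv]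
    have hdv : deriv (fun t => v t φ) θ = Real.cos φ₀ * (-(r ^ 2 * Real.sin θ) / Q ^ ((3 : ℝ) / 2)) := by
      rw [hv, deriv_const_mul _ hfd.differentiableAt, hderiv]
    have hduφ : deriv (fun p => u θ p) φ = 0 := by rw [hu]; exact deriv_const _ _
    have hdvφ : deriv (fun p => v θ p) φ = 0 := by rw [hv]; exact deriv_const _ _
    rw [hdu, hdv, hduφ, hdvφ]
    have hpyth := Real.sin_sq_add_cos_sq φ₀
    field_simp
    linear_combination (-(r ^ 2 * Real.sin θ ^ 2)) * hpyth
  · apply div_neg_of_neg_of_pos _ hQpow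
    nlinarith [mul_pos hr hs]
end

section
/- Let Ω = {(θ, φ) ∈ (0,π)×(0,2π) : φ·sin²θ < |cos θ|}, a set of positive finite Lebesgue measure μ(Ω). Then ∫_Ω √(1 + φ²·sin²θ)·sin θ dθ dφ < μ(Ω). -/
open MeasureTheory

/-- On `Ω = {(θ,φ) ∈ (0,π)×(0,2π) : φ·sin²θ < |cos θ|}`, a set of positive finite
Lebesgue measure, one has `∫_Ω √(1 + φ²·sin²θ)·sin θ dθ dφ < μ(Ω)`. -/
theorem latitude_field_beats_meridian :
    ∀ Ω : Set (ℝ × ℝ),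
      Ω = {p : ℝ × ℝ | p ∈ Set.Ioo 0 Real.pi ×ˢ Set.Ioo 0 (2 * Real.pi) ∧
        p.2 * Real.sin p.1 ^ 2 < |Real.cos p.1|} →
      0 < volume Ω ∧ volume Ω < ⊤ ∧
        (∫ p in Ω, Real.sqrt (1 + p.2 ^ 2 * Real.sin p.1 ^ 2) * Real.sin p.1) <
          (volume Ω).toReal := by
  intro Ω hΩ
  set f : ℝ × ℝ → ℝ := fun p => Real.sqrt (1 + p.2 ^ 2 * Real.sin p.1 ^ 2) * Real.sin p.1
    with hf_def
  have hfc : Continuous f := by fun_prop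
  -- Ω is open
  have hopen : IsOpen Ω := by
    rw [hΩ]
    have h1 : IsOpen {p : ℝ × ℝ | p.2 * Real.sin p.1 ^ 2 < |Real.cos p.1|} :=
      isOpen_lt (by fun_prop) (by fun_prop)
    exact ((isOpen_Ioo.prod isOpen_Ioo).inter h1)
  -- Ω is nonempty
  have hne : Ω.Nonempty := by
    refine ⟨(Real.pi / 4, 1), ?_⟩
    rw [hΩ]
    have hπ := Real.pi_pos
    have h2 : (1 : ℝ) < Real.sqrt 2 := by
      nlinarith [Real.sq_sqrt (by norm_num : (2:ℝ) ≥ 0), Real.sqrt_nonneg 2]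
    constructor
    · constructor
      · constructor <;> [linarith; linarith]
      · have := Real.pi_gt_three
        constructor <;> [norm_num; linarith]
    · simp only [Real.sin_pi_div_four, Real.cos_pi_div_four]
      rw [abs_of_pos (by positivity)]
      nlinarith [Real.sq_sqrt (by norm_num : (2:ℝ) ≥ 0)]
  have hpos : 0 < volume Ω := hopen.measure_pos volume hne
  -- Ω is contained in a compact set
  have hK : IsCompact (Set.Icc (0:ℝ) Real.pi ×ˢ Set.Icc (0:ℝ) (2 * Real.pi)) :=
    isCompact_Icc.prod isCompact_Icc
  have hΩK : Ω ⊆ Set.Icc (0:ℝ) Real.pi ×ˢ Set.Icc (0:ℝ) (2 * Real.pi) := by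
    rw [hΩ]
    rintro ⟨θ, φ⟩ ⟨⟨h1, h2⟩, _⟩
    exact ⟨⟨h1.1.le, h1.2.le⟩, ⟨h2.1.le, h2.2.le⟩⟩
  have hfin : volume Ω < ⊤ := lt_of_le_of_lt (measure_mono hΩK) hK.measure_lt_top
  refine ⟨hpos, hfin, ?_⟩
  -- pointwise bound f p < 1 on Ω
  have hlt : ∀ p ∈ Ω, f p < 1 := by
    rintro ⟨θ, φ⟩ hp
    rw [hΩ] at hp
    obtain ⟨⟨hθ, hφ⟩, hcond⟩ := hp
    have hsin : 0 < Real.sin θ := Real.sin_pos_of_pos_of_lt_pi hθ.1 hθ.2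
    have hφ0 : 0 < φ := hφ.1
    have hsq : (φ * Real.sin θ ^ 2) ^ 2 < Real.cos θ ^ 2 := by
      have h0 : 0 ≤ φ * Real.sin θ ^ 2 := by positivity
      have := abs_nonneg (Real.cos θ)
      nlinarith [sq_abs (Real.cos θ)]
    have hpyth := Real.sin_sq_add_cos_sq θ
    have ha : (0:ℝ) ≤ 1 + φ ^ 2 * Real.sin θ ^ 2 := by positivity
    have hs := Real.sq_sqrt ha
    have hsn := Real.sqrt_nonneg (1 + φ ^ 2 * Real.sin θ ^ 2)
    show Real.sqrt (1 + φ ^ 2 * Real.sin θ ^ 2) * Real.sin θ < 1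
    nlinarith [sq_nonneg (Real.sqrt (1 + φ ^ 2 * Real.sin θ ^ 2) * Real.sin θ - 1)]
  have hfnn : ∀ p ∈ Ω, 0 ≤ f p := by
    rintro ⟨θ, φ⟩ hp
    rw [hΩ] at hp
    have hsin : 0 ≤ Real.sin θ :=
      (Real.sin_pos_of_pos_of_lt_pi hp.1.1.1 hp.1.1.2).le
    exact mul_nonneg (Real.sqrt_nonneg _) hsin
  have hmeas : MeasurableSet Ω := hopen.measurableSet
  have hfint : IntegrableOn f Ω volume :=
    (hfc.continuousOn.integrableOn_compact hK).mono_set hΩK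
  have h1int : IntegrableOn (fun _ : ℝ × ℝ => (1:ℝ)) Ω volume :=
    integrableOn_const hfin.ne
  -- strict inequality via positivity of ∫ (1 - f)
  have hgpos : 0 < ∫ p in Ω, (1 - f p) := by
    rw [setIntegral_pos_iff_support_of_nonneg_ae]
    · refine lt_of_lt_of_le hpos (measure_mono ?_)
      intro p hp
      exact ⟨by simp [Function.support, sub_ne_zero, (hlt p hp).ne'], hp⟩
    · filter_upwards [self_mem_ae_restrict hmeas] with p hp
      exact sub_nonneg.mpr (hlt p hp).le
    · exact h1int.sub hfint
  have hsub : ∫ p in Ω, (1 - f p) = (∫ p in Ω, (1:ℝ)) - ∫ p in Ω, f p :=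
    integral_sub h1int hfint
  have hconst : ∫ p in Ω, (1:ℝ) = (volume Ω).toReal := by
    simp [setIntegral_const, measureReal_def]
  rw [hsub, hconst] at hgpos
  linarith
end

section
/- Fix r > 0 and φ₀ ∈ ℝ. On D = (0,π)×(0,2π) define η(θ,φ) = φ·cos θ + φ₀, g(θ,φ) = φ·sin θ/√(r² + φ²·sin²θ), u = sin(η)·g and v = −cos(η)·g. Then the Euler–Lagrange expression (sin η/r)·∂u/∂θ + (cos η/(r·sin θ))·∂u/∂φ − (cos η/r)·∂v/∂θ + (sin η/(r·sin θ))·∂v/∂φ does not vanish identically on D: there exists a point (θ,φ) ∈ D where it is nonzero. -/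
/-- The circles-of-latitude field fails the Euler–Lagrange equation: with
`η(θ,φ) = φ·cos θ + φ₀`, `g(θ,φ) = φ·sin θ/√(r² + φ²·sin²θ)`, `u = sin(η)·g`,
`v = −cos(η)·g`, the Euler–Lagrange expression
`(sin η/r)·∂θ u + (cos η/(r sin θ))·∂φ u − (cos η/r)·∂θ v + (sin η/(r sin θ))·∂φ v`
does not vanish identically on `D = (0,π)×(0,2π)`. -/
theorem latitude_field_fails_euler_lagrange (r φ₀ : ℝ) (hr : 0 < r)
    (η : ℝ → ℝ → ℝ) (hη : η = fun θ φ => φ * Real.cos θ + φ₀)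
    (g : ℝ → ℝ → ℝ)
    (hg : g = fun θ φ => φ * Real.sin θ / Real.sqrt (r ^ 2 + φ ^ 2 * Real.sin θ ^ 2))
    (u v : ℝ → ℝ → ℝ)
    (hu : u = fun θ φ => Real.sin (η θ φ) * g θ φ)
    (hv : v = fun θ φ => -Real.cos (η θ φ) * g θ φ) :
    ∃ θ φ : ℝ, θ ∈ Set.Ioo 0 Real.pi ∧ φ ∈ Set.Ioo 0 (2 * Real.pi) ∧
      Real.sin (η θ φ) / r * deriv (fun t => u t φ) θ
        + Real.cos (η θ φ) / (r * Real.sin θ) * deriv (fun p => u θ p) φ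
        - Real.cos (η θ φ) / r * deriv (fun t => v t φ) θ
        + Real.sin (η θ φ) / (r * Real.sin θ) * deriv (fun p => v θ p) φ ≠ 0 := by
  subst hη hg hu hv
  have hπ := Real.pi_pos
  refine ⟨Real.pi / 3, Real.pi, ⟨by linarith, by linarith⟩, ⟨hπ, by linarith⟩, ?_⟩
  set θ : ℝ := Real.pi / 3 with hθdef
  set φ : ℝ := Real.pi with hφdef
  have hA : 0 < Real.sin θ := Real.sin_pos_of_pos_of_lt_pi (by positivity) (by rw [hθdef]; linarith)
  have hB : 0 < Real.cos θ := by
    have : Real.cos θ = 1 / 2 := Real.cos_pi_div_three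
    rw [this]; norm_num
  have hφ : 0 < φ := hπ
  set A : ℝ := Real.sin θ with hAdef
  set B : ℝ := Real.cos θ with hBdef
  have hQ : 0 < r ^ 2 + φ ^ 2 * A ^ 2 := by positivity
  set S : ℝ := Real.sqrt (r ^ 2 + φ ^ 2 * A ^ 2) with hSdef
  have hS : 0 < S := Real.sqrt_pos.mpr hQ
  have hS2 : S ^ 2 = r ^ 2 + φ ^ 2 * A ^ 2 := Real.sq_sqrt hQ.le
  -- derivatives in θ direction
  have hQt : HasDerivAt (fun t => r ^ 2 + φ ^ 2 * Real.sin t ^ 2)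
      (φ ^ 2 * ((2 : ℕ) * A ^ 1 * B)) θ :=
    (((Real.hasDerivAt_sin θ).pow 2).const_mul (φ ^ 2)).const_add (r ^ 2)
  have hSt : HasDerivAt (fun t => Real.sqrt (r ^ 2 + φ ^ 2 * Real.sin t ^ 2))
      (φ ^ 2 * ((2 : ℕ) * A ^ 1 * B) / (2 * S)) θ := hQt.sqrt hQ.ne'
  have hNt : HasDerivAt (fun t => φ * Real.sin t) (φ * B) θ :=
    (Real.hasDerivAt_sin θ).const_mul φ
  have hgt : HasDerivAt (fun t => φ * Real.sin t / Real.sqrt (r ^ 2 + φ ^ 2 * Real.sin t ^ 2))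
      ((φ * B * S - φ * A * (φ ^ 2 * ((2 : ℕ) * A ^ 1 * B) / (2 * S))) / S ^ 2) θ :=
    hNt.div hSt hS.ne'
  have hηt : HasDerivAt (fun t => φ * Real.cos t + φ₀) (φ * -A) θ :=
    ((Real.hasDerivAt_cos θ).const_mul φ).add_const φ₀
  set Gθ : ℝ := (φ * B * S - φ * A * (φ ^ 2 * ((2 : ℕ) * A ^ 1 * B) / (2 * S))) / S ^ 2 with hGθdef
  have hut : HasDerivAt (fun t => Real.sin (φ * Real.cos t + φ₀) *
      (φ * Real.sin t / Real.sqrt (r ^ 2 + φ ^ 2 * Real.sin t ^ 2)))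
      (Real.cos (φ * B + φ₀) * (φ * -A) * (φ * A / S) +
        Real.sin (φ * B + φ₀) * Gθ) θ := hηt.sin.mul hgt
  have hvt : HasDerivAt (fun t => -Real.cos (φ * Real.cos t + φ₀) *
      (φ * Real.sin t / Real.sqrt (r ^ 2 + φ ^ 2 * Real.sin t ^ 2)))
      (-(-Real.sin (φ * B + φ₀) * (φ * -A)) * (φ * A / S) +
        -Real.cos (φ * B + φ₀) * Gθ) θ := hηt.cos.neg.mul hgt
  -- derivatives in φ direction
  have hQp : HasDerivAt (fun p => r ^ 2 + p ^ 2 * A ^ 2)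
      ((2 : ℕ) * φ ^ 1 * 1 * A ^ 2) φ :=
    ((((hasDerivAt_id φ).pow 2).mul_const (A ^ 2))).const_add (r ^ 2)
  have hSp : HasDerivAt (fun p => Real.sqrt (r ^ 2 + p ^ 2 * A ^ 2))
      ((2 : ℕ) * φ ^ 1 * 1 * A ^ 2 / (2 * S)) φ := hQp.sqrt hQ.ne'
  have hNp : HasDerivAt (fun p => p * A) (1 * A) φ := (hasDerivAt_id φ).mul_const A
  have hgp : HasDerivAt (fun p => p * A / Real.sqrt (r ^ 2 + p ^ 2 * A ^ 2))
      ((1 * A * S - φ * A * ((2 : ℕ) * φ ^ 1 * 1 * A ^ 2 / (2 * S))) / S ^ 2) φ :=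
    hNp.div hSp hS.ne'
  have hηp : HasDerivAt (fun p => p * B + φ₀) (1 * B) φ :=
    ((hasDerivAt_id φ).mul_const B).add_const φ₀
  set Gφ : ℝ := (1 * A * S - φ * A * ((2 : ℕ) * φ ^ 1 * 1 * A ^ 2 / (2 * S))) / S ^ 2 with hGφdef
  have hup : HasDerivAt (fun p => Real.sin (p * B + φ₀) * (p * A / Real.sqrt (r ^ 2 + p ^ 2 * A ^ 2)))
      (Real.cos (φ * B + φ₀) * (1 * B) * (φ * A / S) + Real.sin (φ * B + φ₀) * Gφ) φ :=
    hηp.sin.mul hgp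
  have hvp : HasDerivAt (fun p => -Real.cos (p * B + φ₀) * (p * A / Real.sqrt (r ^ 2 + p ^ 2 * A ^ 2)))
      (-(-Real.sin (φ * B + φ₀) * (1 * B)) * (φ * A / S) + -Real.cos (φ * B + φ₀) * Gφ) φ :=
    hηp.cos.neg.mul hgp
  rw [hut.deriv, hvt.deriv, hup.deriv, hvp.deriv]
  set sη : ℝ := Real.sin (φ * B + φ₀) with hsη
  set cη : ℝ := Real.cos (φ * B + φ₀) with hcη
  have hpyth : sη ^ 2 + cη ^ 2 = 1 := Real.sin_sq_add_cos_sq _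
  have hE : sη / r * (cη * (φ * -A) * (φ * A / S) + sη * Gθ)
      + cη / (r * A) * (cη * (1 * B) * (φ * A / S) + sη * Gφ)
      - cη / r * (-(-sη * (φ * -A)) * (φ * A / S) + -cη * Gθ)
      + sη / (r * A) * (-(-sη * (1 * B)) * (φ * A / S) + -cη * Gφ)
      = Gθ / r + B * (φ * A / S) / (r * A) := by
    linear_combination (Gθ / r + B * (φ * A / S) / (r * A)) * hpyth
  rw [hE]
  have hGθpos : 0 < Gθ := by
    rw [hGθdef]
    have hnum : φ * B * S - φ * A * (φ ^ 2 * ((2 : ℕ) * A ^ 1 * B) / (2 * S)) = φ * B * r ^ 2 / S := by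
      field_simp
      linear_combination 2 * hS2
    rw [hnum]
    exact div_pos (div_pos (mul_pos (mul_pos hφ hB) (pow_pos hr 2)) hS) (pow_pos hS 2)
  have h2 : 0 < B * (φ * A / S) / (r * A) :=
    div_pos (mul_pos hB (div_pos (mul_pos hφ hA) hS)) (mul_pos hr hA)
  exact (add_pos (div_pos hGθpos hr) h2).ne'
end
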